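/- arXiv:1904.05613 — 3 statements merged into one kernel-verified Lean document; each statement's English description precedes it below -/
import Mathlib

section
/- For all real numbers $x, y$, the inequality $|x^- - y^-|^p \leq |x-y|^{p-2}(x-y)(y^- - x^-)$ holds, where $t^- = \max(-t, 0)$ denotes the negative part and $p > 1$. -/
/-! Write `d = x - y` and `e = y⁻ - x⁻`. Since `t ↦ t⁻` is antitone, `d e = |d| |e|`, and since it is
`1`-Lipschitz, `|e| ≤ |d|`; hence `|d|^(p-2) d e = |d|^(p-1) |e| ≥ |e|^(p-1) |e| = |e|^p`. -/

open Real

theorem Antitone.sub_mul_sub_swap_nonneg {α : Type*} [Ring α] [LinearOrder α] [IsOrderedRing α]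
    {f : α → α} (hf : Antitone f) (x y : α) : 0 ≤ (x - y) * (f y - f x) := by
  rcases le_total x y with hxy | hxy
  · exact mul_nonneg_of_nonpos_of_nonpos (sub_nonpos.mpr hxy) (sub_nonpos.mpr (hf hxy))
  · exact mul_nonneg (sub_nonneg.mpr hxy) (sub_nonneg.mpr (hf hxy))

theorem abs_rpow_le_abs_rpow_sub_two_mul_mul {p d e : ℝ} (hp : 1 ≤ p) (hed : |e| ≤ |d|)
    (hde : 0 ≤ d * e) : |e| ^ p ≤ |d| ^ (p - 2) * d * e := by
  rcases eq_or_ne e 0 with rfl | he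
  · simp [zero_rpow (by linarith : p ≠ 0)]
  have he' : |e| ≠ 0 := abs_ne_zero.mpr he
  have hd : |d| ≠ 0 := ((abs_pos.mpr he).trans_le hed).ne'
  calc |e| ^ p = |e| ^ (p - 1) * |e| := by rw [rpow_sub_one he', div_mul_cancel₀ _ he']
    _ ≤ |d| ^ (p - 1) * |e| := by gcongr
    _ = |d| ^ (p - 2) * |d| * |e| := by rw [← rpow_add_one hd]; ring_nf
    _ = |d| ^ (p - 2) * d * e := by rw [mul_assoc, ← abs_mul, abs_of_nonneg hde, mul_assoc]

/-- For all real `x, y` and `p > 1`, with `t⁻ = max (-t) 0` the negative part,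
`|x⁻ - y⁻|^p ≤ |x-y|^(p-2) (x-y) (y⁻ - x⁻)` (the expression `|x-y|^(p-2)(x-y)` being `0`
when `x = y`, which is automatic with real powers). -/
theorem neg_part_inequality (p : ℝ) (hp : 1 < p) (x y : ℝ) :
    |max (-x) 0 - max (-y) 0| ^ p ≤
      |x - y| ^ (p - 2) * (x - y) * (max (-y) 0 - max (-x) 0) := by
  have hanti : Antitone fun t : ℝ ↦ max (-t) 0 := fun _ _ h ↦ max_le_max (neg_le_neg h) le_rfl
  have hlip : |max (-y) 0 - max (-x) 0| ≤ |x - y| := by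
    simpa [abs_sub_comm, neg_sub_neg, neg_add_eq_sub] using abs_max_sub_max_le_abs (-y) (-x) 0
  rw [abs_sub_comm]
  exact abs_rpow_le_abs_rpow_sub_two_mul_mul hp.le hlip (hanti.sub_mul_sub_swap_nonneg x y)
end

section
/- For all real numbers $x, y$ and $p > 1$, one has $|x^+ - y^+|^p \leq |x-y|^{p-2}(x-y)(x^+ - y^+)$, where $t^+ = \max(t,0)$ is the positive part. -/
open Real

theorem Monotone.sub_mul_sub_nonneg {α : Type*} [Ring α] [LinearOrder α] [IsOrderedRing α]
    {f : α → α} (hf : Monotone f) (x y : α) :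
    0 ≤ (x - y) * (f x - f y) := by
  rcases le_total y x with h | h
  · exact mul_nonneg (sub_nonneg.2 h) (sub_nonneg.2 (hf h))
  · exact mul_nonneg_of_nonpos_of_nonpos (sub_nonpos.2 h) (sub_nonpos.2 (hf h))

theorem abs_rpow_le_abs_rpow_sub_two_mul_mul_s1 {p a b : ℝ} (hp : 1 ≤ p) (hab : 0 ≤ a * b)
    (hba : |b| ≤ |a|) : |b| ^ p ≤ |a| ^ (p - 2) * a * b := by
  rcases eq_or_ne b 0 with rfl | hb
  · simp [zero_rpow (by linarith : p ≠ 0)]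
  have hb' : 0 < |b| := abs_pos.2 hb
  have ha : 0 < |a| := hb'.trans_le hba
  calc |b| ^ p = |b| ^ (p - 1) * |b| := by rw [← rpow_add_one hb'.ne', sub_add_cancel]
    _ ≤ |a| ^ (p - 1) * |b| := by gcongr
    _ = |a| ^ (p - 2) * (|a| * |b|) := by
      rw [← mul_assoc, ← rpow_add_one ha.ne']; ring_nf
    _ = |a| ^ (p - 2) * a * b := by rw [← abs_mul, abs_of_nonneg hab, mul_assoc]

/-- For all real `x, y` and `p > 1`, with `t⁺ = max t 0` the positive part,
`|x⁺ - y⁺|^p ≤ |x-y|^(p-2) (x-y) (x⁺ - y⁺)` (the expression `|x-y|^(p-2)(x-y)` being `0`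
when `x = y`, which is automatic with real powers). -/
theorem pos_part_inequality (p : ℝ) (hp : 1 < p) (x y : ℝ) :
    |max x 0 - max y 0| ^ p ≤
      |x - y| ^ (p - 2) * (x - y) * (max x 0 - max y 0) :=
  abs_rpow_le_abs_rpow_sub_two_mul_mul_s1 hp.le
    ((monotone_id.max monotone_const).sub_mul_sub_nonneg x y) (abs_max_sub_max_le_abs x y 0)
end

section
/- Let $u \in X$ be a weak solution of $(-\Delta)^s_p u = f$ in $\Omega$ with Neumann condition $\mathscr{N}_{s,p}u = g$ in $\mathbb{R}^N\setminus\overline\Omega$. Then the boundary condition holds pointwise: $\mathscr{N}_{s,p}u(x) = \int_\Omega |u(x)-u(y)|^{p-2}\frac{u(x)-u(y)}{|x-y|^{N+ps}}\,dy = g(x)$ for almost every $x \in \mathbb{R}^N\setminus\overline\Omega$. -/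
open MeasureTheory Set
open scoped ENNReal

/-- The region `ℝ^{2N} \ (Ωᶜ)² = {(x,y) : x ∈ Ω or y ∈ Ω}`. -/
def crossRegion {N : ℕ} (Ω : Set (EuclideanSpace ℝ (Fin N))) :
    Set (EuclideanSpace ℝ (Fin N) × EuclideanSpace ℝ (Fin N)) :=
  {z | z.1 ∈ Ω ∨ z.2 ∈ Ω}

/-- The kernel `|u(x)-u(y)|^{p-2}(u(x)-u(y)) / |x-y|^{N+ps}`. -/
noncomputable def pKer {N : ℕ} (p s : ℝ) (u : EuclideanSpace ℝ (Fin N) → ℝ)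
    (x y : EuclideanSpace ℝ (Fin N)) : ℝ :=
  |u x - u y| ^ (p - 2) * (u x - u y) / ‖x - y‖ ^ ((N : ℝ) + p * s)

/-- The nonlocal normal `p`-derivative `𝒩_{s,p} u (x) = ∫_Ω pKer p s u x y dy`. -/
noncomputable def pNeumann {N : ℕ} (p s : ℝ) (Ω : Set (EuclideanSpace ℝ (Fin N)))
    (u : EuclideanSpace ℝ (Fin N) → ℝ) (x : EuclideanSpace ℝ (Fin N)) : ℝ :=
  ∫ y in Ω, pKer p s u x y

/-- Membership in the space `X`. -/
def memX {N : ℕ} (p s : ℝ) (Ω : Set (EuclideanSpace ℝ (Fin N)))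
    (g : EuclideanSpace ℝ (Fin N) → ℝ) (u : EuclideanSpace ℝ (Fin N) → ℝ) : Prop :=
  Measurable u ∧
  (∫⁻ x in Ω, ENNReal.ofReal (|u x| ^ p)) < ⊤ ∧
  (∫⁻ x in Ωᶜ, ENNReal.ofReal (|g x| * |u x| ^ p)) < ⊤ ∧
  (∫⁻ z in crossRegion Ω,
      ENNReal.ofReal (|u z.1 - u z.2| ^ p / ‖z.1 - z.2‖ ^ ((N : ℝ) + p * s))) < ⊤

section AuxNeumann

lemma pKer_antisymm {N : ℕ} (p s : ℝ) (u : EuclideanSpace ℝ (Fin N) → ℝ)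
    (x y : EuclideanSpace ℝ (Fin N)) : pKer p s u x y = - pKer p s u y x := by
  unfold pKer
  rw [abs_sub_comm (u y) (u x), norm_sub_rev y x]
  ring

lemma abs_pKer_num {p : ℝ} (hp : 1 < p) (a : ℝ) :
    |(|a|) ^ (p - 2) * a| = |a| ^ (p - 1) := by
  rcases eq_or_ne a 0 with rfl | h
  · simp [Real.zero_rpow (by linarith : p - 1 ≠ 0)]
  · have ha : 0 < |a| := abs_pos.2 h
    rw [abs_mul, abs_of_nonneg (Real.rpow_nonneg (abs_nonneg a) _)]
    calc |a| ^ (p - 2) * |a| = |a| ^ (p - 2) * |a| ^ (1 : ℝ) := by rw [Real.rpow_one]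
      _ = |a| ^ (p - 2 + 1) := (Real.rpow_add ha _ _).symm
      _ = |a| ^ (p - 1) := by ring_nf

lemma rpow_pred_le {p : ℝ} (hp : 1 < p) {w : ℝ} (hw : 0 ≤ w) :
    w ^ (p - 1) ≤ 1 + w ^ p := by
  rcases le_total w 1 with h | h
  · have h1 : w ^ (p - 1) ≤ 1 := Real.rpow_le_one hw h (by linarith)
    have h2 : 0 ≤ w ^ p := Real.rpow_nonneg hw p
    linarith
  · have h1 : w ^ (p - 1) ≤ w ^ p := Real.rpow_le_rpow_of_exponent_le h (by linarith)
    have h2 : (0:ℝ) ≤ 1 := zero_le_one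
    linarith

lemma abs_pKer_le {N : ℕ} {p s : ℝ} (hp : 1 < p) (hs : 0 < s)
    (u : EuclideanSpace ℝ (Fin N) → ℝ) {x y : EuclideanSpace ℝ (Fin N)} {δ : ℝ}
    (hδ : 0 < δ) (hd : δ ≤ ‖x - y‖) :
    |pKer p s u x y| ≤ (1 + |u x - u y| ^ p) / δ ^ ((N : ℝ) + p * s) := by
  have he : (0:ℝ) < (N : ℝ) + p * s := by positivity
  have hden : (0:ℝ) < δ ^ ((N : ℝ) + p * s) := Real.rpow_pos_of_pos hδ _
  have hden2 : δ ^ ((N : ℝ) + p * s) ≤ ‖x - y‖ ^ ((N : ℝ) + p * s) :=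
    Real.rpow_le_rpow hδ.le hd he.le
  have hnum : |(|u x - u y|) ^ (p - 2) * (u x - u y)| = |u x - u y| ^ (p - 1) :=
    abs_pKer_num hp _
  have h1 : |pKer p s u x y| ≤ |u x - u y| ^ (p - 1) / δ ^ ((N : ℝ) + p * s) := by
    unfold pKer
    rw [abs_div, hnum, abs_of_nonneg (Real.rpow_nonneg (norm_nonneg _) _)]
    gcongr
  refine h1.trans ?_
  gcongr
  exact rpow_pred_le hp (abs_nonneg _)

lemma measurable_pKer {N : ℕ} (p s : ℝ) {u : EuclideanSpace ℝ (Fin N) → ℝ}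
    (hu : Measurable u) :
    Measurable (fun z : EuclideanSpace ℝ (Fin N) × EuclideanSpace ℝ (Fin N) =>
      pKer p s u z.1 z.2) := by
  unfold pKer
  have h1 : Measurable (fun z : EuclideanSpace ℝ (Fin N) × EuclideanSpace ℝ (Fin N) =>
      u z.1 - u z.2) := (hu.comp measurable_fst).sub (hu.comp measurable_snd)
  exact ((h1.abs.pow measurable_const).mul h1).div
    (((measurable_fst.sub measurable_snd).norm).pow measurable_const)

lemma measurable_crossRegion {N : ℕ} {Ω : Set (EuclideanSpace ℝ (Fin N))}
    (hΩ : MeasurableSet Ω) : MeasurableSet (crossRegion Ω) := by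
  have : crossRegion Ω = (Ω ×ˢ univ) ∪ ((univ : Set (EuclideanSpace ℝ (Fin N))) ×ˢ Ω) := by
    ext z; simp [crossRegion, Set.mem_prod]
  rw [this]
  exact (hΩ.prod MeasurableSet.univ).union (MeasurableSet.univ.prod hΩ)

lemma wp_bound {N : ℕ} {p e M : ℝ} (hp : 0 < p) (he : 0 < e)
    (u : EuclideanSpace ℝ (Fin N) → ℝ) {x y : EuclideanSpace ℝ (Fin N)}
    (hxy : ‖x - y‖ ≤ M) :
    |u x - u y| ^ p ≤ M ^ e * (|u x - u y| ^ p / ‖x - y‖ ^ e) := by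
  rcases eq_or_ne x y with rfl | hne
  · simp [Real.zero_rpow hp.ne', abs_nonneg]
  · have h0 : 0 < ‖x - y‖ := by
      rw [norm_pos_iff]; exact sub_ne_zero.2 hne
    have hMe : ‖x - y‖ ^ e ≤ M ^ e := Real.rpow_le_rpow h0.le hxy he.le
    have hpos : (0:ℝ) < ‖x - y‖ ^ e := Real.rpow_pos_of_pos h0 _
    calc |u x - u y| ^ p = ‖x - y‖ ^ e * (|u x - u y| ^ p / ‖x - y‖ ^ e) := by
          field_simp
      _ ≤ M ^ e * (|u x - u y| ^ p / ‖x - y‖ ^ e) := by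
          apply mul_le_mul_of_nonneg_right hMe
          positivity

lemma integrableOn_pKer_prod {N : ℕ} {p s : ℝ} (hp : 1 < p) (hs : 0 < s)
    {Ω : Set (EuclideanSpace ℝ (Fin N))} {u : EuclideanSpace ℝ (Fin N) → ℝ}
    (hu : Measurable u)
    (hX : (∫⁻ z in crossRegion Ω,
      ENNReal.ofReal (|u z.1 - u z.2| ^ p / ‖z.1 - z.2‖ ^ ((N : ℝ) + p * s))) < ⊤)
    {S T : Set (EuclideanSpace ℝ (Fin N))} (hS : MeasurableSet S) (hT : MeasurableSet T)
    (hSb : Bornology.IsBounded S) (hTb : Bornology.IsBounded T)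
    (hsub : S ×ˢ T ⊆ crossRegion Ω)
    {δ : ℝ} (hδ : 0 < δ) (hdist : ∀ x ∈ S, ∀ y ∈ T, δ ≤ dist x y) :
    IntegrableOn (fun z : EuclideanSpace ℝ (Fin N) × EuclideanSpace ℝ (Fin N) =>
      pKer p s u z.1 z.2) (S ×ˢ T) := by
  have hp0 : (0:ℝ) < p := by linarith
  have he : (0:ℝ) < (N : ℝ) + p * s := by positivity
  obtain ⟨r, hr⟩ := (hSb.union hTb).subset_closedBall 0
  set M : ℝ := max (2 * r) 1 with hMdef
  have hM : (0:ℝ) < M := lt_of_lt_of_le one_pos (le_max_right _ _)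
  have hxy : ∀ z ∈ S ×ˢ T, ‖z.1 - z.2‖ ≤ M := by
    rintro z ⟨hz1, hz2⟩
    have h1 : ‖z.1‖ ≤ r := mem_closedBall_zero_iff.1 (hr (Or.inl hz1))
    have h2 : ‖z.2‖ ≤ r := mem_closedBall_zero_iff.1 (hr (Or.inr hz2))
    calc ‖z.1 - z.2‖ ≤ ‖z.1‖ + ‖z.2‖ := norm_sub_le _ _
      _ ≤ 2 * r := by linarith
      _ ≤ M := le_max_left _ _
  have hμfin : volume (S ×ˢ T) < ⊤ := by
    rw [Measure.volume_eq_prod, Measure.prod_prod]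
    exact ENNReal.mul_lt_top hSb.measure_lt_top hTb.measure_lt_top
  have hWp : (∫⁻ z in S ×ˢ T, ENNReal.ofReal (|u z.1 - u z.2| ^ p)) < ⊤ := by
    have step1 : ∀ᵐ z ∂(volume.restrict (S ×ˢ T)),
        ENNReal.ofReal (|u z.1 - u z.2| ^ p) ≤
          ENNReal.ofReal (M ^ ((N : ℝ) + p * s)) *
            ENNReal.ofReal (|u z.1 - u z.2| ^ p / ‖z.1 - z.2‖ ^ ((N : ℝ) + p * s)) := by
      refine (ae_restrict_iff' (hS.prod hT)).2 (Filter.Eventually.of_forall fun z hz => ?_)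
      rw [← ENNReal.ofReal_mul (by positivity)]
      exact ENNReal.ofReal_le_ofReal (wp_bound hp0 he u (hxy z hz))
    calc (∫⁻ z in S ×ˢ T, ENNReal.ofReal (|u z.1 - u z.2| ^ p))
        ≤ ∫⁻ z in S ×ˢ T, ENNReal.ofReal (M ^ ((N : ℝ) + p * s)) *
            ENNReal.ofReal (|u z.1 - u z.2| ^ p / ‖z.1 - z.2‖ ^ ((N : ℝ) + p * s)) :=
          lintegral_mono_ae step1
      _ = ENNReal.ofReal (M ^ ((N : ℝ) + p * s)) *
            ∫⁻ z in S ×ˢ T,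
              ENNReal.ofReal (|u z.1 - u z.2| ^ p / ‖z.1 - z.2‖ ^ ((N : ℝ) + p * s)) :=
          lintegral_const_mul' _ _ ENNReal.ofReal_ne_top
      _ ≤ ENNReal.ofReal (M ^ ((N : ℝ) + p * s)) *
            ∫⁻ z in crossRegion Ω,
              ENNReal.ofReal (|u z.1 - u z.2| ^ p / ‖z.1 - z.2‖ ^ ((N : ℝ) + p * s)) :=
          mul_le_mul_right (lintegral_mono_set hsub) _
      _ < ⊤ := ENNReal.mul_lt_top (by simp [ENNReal.ofReal_lt_top]) hX
  have hwInt : IntegrableOn (fun z : EuclideanSpace ℝ (Fin N) × EuclideanSpace ℝ (Fin N) =>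
      |u z.1 - u z.2| ^ p) (S ×ˢ T) := by
    constructor
    · exact (((hu.comp measurable_fst).sub
        (hu.comp measurable_snd)).abs.pow measurable_const).aestronglyMeasurable
    · rw [hasFiniteIntegral_iff_ofReal
        (Filter.Eventually.of_forall fun z => Real.rpow_nonneg (abs_nonneg _) _)]
      exact hWp
  have hGint : IntegrableOn (fun z : EuclideanSpace ℝ (Fin N) × EuclideanSpace ℝ (Fin N) =>
      (1 + |u z.1 - u z.2| ^ p) / δ ^ ((N : ℝ) + p * s)) (S ×ˢ T) :=
    (((integrableOn_const hμfin.ne).add hwInt).div_const _)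
  refine Integrable.mono' hGint (measurable_pKer p s hu).aestronglyMeasurable ?_
  refine (ae_restrict_iff' (hS.prod hT)).2 (Filter.Eventually.of_forall fun z hz => ?_)
  rw [Real.norm_eq_abs]
  exact abs_pKer_le hp hs u hδ (by rw [← dist_eq_norm]; exact hdist _ hz.1 _ hz.2)

lemma key_identity {N : ℕ} {p s : ℝ} (hp : 1 < p) (hs : 0 < s)
    {Ω : Set (EuclideanSpace ℝ (Fin N))} (hΩo : IsOpen Ω) (hΩb : Bornology.IsBounded Ω)
    {f g u : EuclideanSpace ℝ (Fin N) → ℝ}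
    (hg : IntegrableOn g (closure Ω)ᶜ)
    (huX : memX p s Ω g u)
    (hweak : ∀ v : EuclideanSpace ℝ (Fin N) → ℝ, memX p s Ω g v →
      (1 / 2) * (∫ z in crossRegion Ω,
          pKer p s u z.1 z.2 * (v z.1 - v z.2)) =
        (∫ x in Ω, f x * v x) + ∫ x in (closure Ω)ᶜ, g x * v x)
    {S : Set (EuclideanSpace ℝ (Fin N))} (hS : MeasurableSet S)
    (hSb : Bornology.IsBounded S) (hScl : S ⊆ (closure Ω)ᶜ)
    {δ : ℝ} (hδ : 0 < δ) (hdist : ∀ x ∈ S, ∀ y ∈ Ω, δ ≤ dist x y) :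
    ∫ x in S, pNeumann p s Ω u x = ∫ x in S, g x := by
  have hp0 : (0:ℝ) < p := by linarith
  have he : (0:ℝ) < (N : ℝ) + p * s := by positivity
  obtain ⟨hu, -, -, hX⟩ := huX
  have hΩm : MeasurableSet Ω := hΩo.measurableSet
  have hSΩ : ∀ {x}, x ∈ S → x ∉ Ω := fun {x} hx hxΩ => hScl hx (subset_closure hxΩ)
  set v : EuclideanSpace ℝ (Fin N) → ℝ := S.indicator (fun _ => (1:ℝ)) with hvdef
  have hv1 : ∀ {x}, x ∈ S → v x = 1 := fun {x} hx => Set.indicator_of_mem hx _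
  have hv0 : ∀ {x}, x ∉ S → v x = 0 := fun {x} hx => Set.indicator_of_notMem hx _
  -- v belongs to X
  have hvX : memX p s Ω g v := by
    refine ⟨measurable_const.indicator hS, ?_, ?_, ?_⟩
    · have hz : (∫⁻ x in Ω, ENNReal.ofReal (|v x| ^ p)) = 0 := by
        rw [setLIntegral_congr_fun hΩm (fun x hx => ?_),
          lintegral_zero]
        rw [hv0 (fun h => hSΩ h hx)]
        simp [Real.zero_rpow hp0.ne']
      rw [hz]; simp
    · have hle : (∫⁻ x in Ωᶜ, ENNReal.ofReal (|g x| * |v x| ^ p)) ≤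
          ∫⁻ x in Ωᶜ, S.indicator (fun x => ENNReal.ofReal |g x|) x := by
        refine lintegral_mono fun x => ?_
        by_cases hx : x ∈ S
        · rw [hv1 hx, Set.indicator_of_mem hx]
          simp [Real.one_rpow]
        · rw [hv0 hx, Set.indicator_of_notMem hx]
          simp [Real.zero_rpow hp0.ne']
      refine lt_of_le_of_lt hle ?_
      rw [lintegral_indicator hS, Measure.restrict_restrict hS]
      have hSinter : S ∩ Ωᶜ = S := Set.inter_eq_left.2 fun x hx => hSΩ hx
      rw [hSinter]
      refine lt_of_le_of_lt (lintegral_mono_set hScl) ?_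
      have := hg.2
      rw [hasFiniteIntegral_iff_norm] at this
      simpa [Real.norm_eq_abs] using this
    · set c : ENNReal := ENNReal.ofReal (1 / δ ^ ((N : ℝ) + p * s)) with hcdef
      set U : Set (EuclideanSpace ℝ (Fin N) × EuclideanSpace ℝ (Fin N)) :=
        (S ×ˢ Ω) ∪ (Ω ×ˢ S) with hUdef
      have hUm : MeasurableSet U := (hS.prod hΩm).union (hΩm.prod hS)
      have hcross : MeasurableSet (crossRegion Ω) := measurable_crossRegion hΩm
      have hptwise : ∀ z ∈ crossRegion Ω,
          ENNReal.ofReal (|v z.1 - v z.2| ^ p / ‖z.1 - z.2‖ ^ ((N : ℝ) + p * s)) ≤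
            U.indicator (fun _ => c) z := by
        intro z hz
        by_cases h1 : z.1 ∈ S <;> by_cases h2 : z.2 ∈ S
        · exact absurd hz (by simp [crossRegion, hSΩ h1, hSΩ h2])
        · have hz2 : z.2 ∈ Ω := hz.resolve_left (hSΩ h1)
          have hzU : z ∈ U := Or.inl ⟨h1, hz2⟩
          rw [Set.indicator_of_mem hzU, hv1 h1, hv0 h2, hcdef]
          refine ENNReal.ofReal_le_ofReal ?_
          have hd : δ ≤ ‖z.1 - z.2‖ := by
            rw [← dist_eq_norm]; exact hdist _ h1 _ hz2
          have h3 : δ ^ ((N : ℝ) + p * s) ≤ ‖z.1 - z.2‖ ^ ((N : ℝ) + p * s) :=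
            Real.rpow_le_rpow hδ.le hd he.le
          have h4 : (0:ℝ) < δ ^ ((N : ℝ) + p * s) := Real.rpow_pos_of_pos hδ _
          rw [show |(1:ℝ) - 0| ^ p = 1 by simp [Real.one_rpow]]
          exact one_div_le_one_div_of_le h4 h3
        · have hz1 : z.1 ∈ Ω := hz.resolve_right (hSΩ h2)
          have hzU : z ∈ U := Or.inr ⟨hz1, h2⟩
          rw [Set.indicator_of_mem hzU, hv0 h1, hv1 h2, hcdef]
          refine ENNReal.ofReal_le_ofReal ?_
          have hd : δ ≤ ‖z.1 - z.2‖ := by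
            rw [← dist_eq_norm, dist_comm]; exact hdist _ h2 _ hz1
          have h3 : δ ^ ((N : ℝ) + p * s) ≤ ‖z.1 - z.2‖ ^ ((N : ℝ) + p * s) :=
            Real.rpow_le_rpow hδ.le hd he.le
          have h4 : (0:ℝ) < δ ^ ((N : ℝ) + p * s) := Real.rpow_pos_of_pos hδ _
          rw [show |(0:ℝ) - 1| ^ p = 1 by simp [Real.one_rpow]]
          exact one_div_le_one_div_of_le h4 h3
        · rw [hv0 h1, hv0 h2]
          simp [Real.zero_rpow hp0.ne']
      calc (∫⁻ z in crossRegion Ω,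
            ENNReal.ofReal (|v z.1 - v z.2| ^ p / ‖z.1 - z.2‖ ^ ((N : ℝ) + p * s)))
          ≤ ∫⁻ z in crossRegion Ω, U.indicator (fun _ => c) z :=
            lintegral_mono_ae ((ae_restrict_iff' hcross).2
              (Filter.Eventually.of_forall hptwise))
        _ ≤ ∫⁻ z, U.indicator (fun _ => c) z := setLIntegral_le_lintegral _ _
        _ = c * volume U := by rw [lintegral_indicator hUm, setLIntegral_const]
        _ < ⊤ := by
            refine ENNReal.mul_lt_top ENNReal.ofReal_lt_top ?_
            refine lt_of_le_of_lt (measure_union_le _ _) (ENNReal.add_lt_top.2 ⟨?_, ?_⟩)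
            · rw [Measure.volume_eq_prod, Measure.prod_prod]
              exact ENNReal.mul_lt_top hSb.measure_lt_top hΩb.measure_lt_top
            · rw [Measure.volume_eq_prod, Measure.prod_prod]
              exact ENNReal.mul_lt_top hΩb.measure_lt_top hSb.measure_lt_top
  -- apply the weak formulation to v
  have hw := hweak v hvX
  set K : EuclideanSpace ℝ (Fin N) × EuclideanSpace ℝ (Fin N) → ℝ :=
    fun z => pKer p s u z.1 z.2 with hKdef
  have hsubSΩ : S ×ˢ Ω ⊆ crossRegion Ω := fun z hz => Or.inr hz.2
  have hsubΩS : Ω ×ˢ S ⊆ crossRegion Ω := fun z hz => Or.inl hz.1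
  have hK1 : IntegrableOn K (S ×ˢ Ω) :=
    integrableOn_pKer_prod hp hs hu hX hS hΩm hSb hΩb hsubSΩ hδ hdist
  have hK2 : IntegrableOn K (Ω ×ˢ S) :=
    integrableOn_pKer_prod hp hs hu hX hΩm hS hΩb hSb hsubΩS hδ
      (fun x hx y hy => by rw [dist_comm]; exact hdist y hy x hx)
  have hcross : MeasurableSet (crossRegion Ω) := measurable_crossRegion hΩm
  have hcongr : (∫ z in crossRegion Ω, pKer p s u z.1 z.2 * (v z.1 - v z.2)) =
      ∫ z in crossRegion Ω, ((S ×ˢ Ω).indicator K z - (Ω ×ˢ S).indicator K z) := by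
    refine setIntegral_congr_fun hcross fun z hz => ?_
    by_cases h1 : z.1 ∈ S <;> by_cases h2 : z.2 ∈ S
    · exact absurd hz (by simp [crossRegion, hSΩ h1, hSΩ h2])
    · have hz2 : z.2 ∈ Ω := hz.resolve_left (hSΩ h1)
      rw [hv1 h1, hv0 h2, Set.indicator_of_mem (Set.mk_mem_prod h1 hz2) K,
        Set.indicator_of_notMem (fun hzz => h2 hzz.2) K]
      simp [hKdef]
    · have hz1 : z.1 ∈ Ω := hz.resolve_right (hSΩ h2)
      rw [hv0 h1, hv1 h2, Set.indicator_of_mem (Set.mk_mem_prod hz1 h2) K,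
        Set.indicator_of_notMem (fun hzz => h1 hzz.1) K]
      simp [hKdef]
    · rw [hv0 h1, hv0 h2, Set.indicator_of_notMem (fun hzz => h1 hzz.1) K,
        Set.indicator_of_notMem (fun hzz => h2 hzz.2) K]
      simp
  have hi1 : Integrable ((S ×ˢ Ω).indicator K) (volume.restrict (crossRegion Ω)) :=
    (hK1.integrable_indicator (hS.prod hΩm)).restrict
  have hi2 : Integrable ((Ω ×ˢ S).indicator K) (volume.restrict (crossRegion Ω)) :=
    (hK2.integrable_indicator (hΩm.prod hS)).restrict
  have hIseq : (∫ z in crossRegion Ω,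
        ((S ×ˢ Ω).indicator K z - (Ω ×ˢ S).indicator K z)) =
      (∫ z in S ×ˢ Ω, K z) - ∫ z in Ω ×ˢ S, K z := by
    rw [integral_sub hi1 hi2, setIntegral_indicator (hS.prod hΩm),
      setIntegral_indicator (hΩm.prod hS),
      Set.inter_eq_right.2 hsubSΩ, Set.inter_eq_right.2 hsubΩS]
  have hK1' : Integrable K ((volume.restrict S).prod (volume.restrict Ω)) := by
    rw [Measure.prod_restrict, ← Measure.volume_eq_prod]; exact hK1
  have hK2' : Integrable K ((volume.restrict Ω).prod (volume.restrict S)) := by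
    rw [Measure.prod_restrict, ← Measure.volume_eq_prod]; exact hK2
  have hD : (∫ z in S ×ˢ Ω, K z) = ∫ x in S, pNeumann p s Ω u x := by
    rw [show (∫ z in S ×ˢ Ω, K z) =
        ∫ z, K z ∂((volume.restrict S).prod (volume.restrict Ω)) by
      rw [Measure.prod_restrict, ← Measure.volume_eq_prod]]
    rw [integral_prod K hK1']
    rfl
  have hE : (∫ z in Ω ×ˢ S, K z) = - ∫ x in S, pNeumann p s Ω u x := by
    rw [show (∫ z in Ω ×ˢ S, K z) =
        ∫ z, K z ∂((volume.restrict Ω).prod (volume.restrict S)) by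
      rw [Measure.prod_restrict, ← Measure.volume_eq_prod]]
    rw [integral_prod_symm K hK2']
    have hinner : ∀ y, (∫ x in Ω, K (x, y)) = - pNeumann p s Ω u y := fun y => by
      rw [show (∫ x in Ω, K (x, y)) = ∫ x in Ω, -(pKer p s u y x) from
        setIntegral_congr_fun hΩm fun x _ => pKer_antisymm p s u x y, integral_neg]
      rfl
    rw [show (∫ y in S, ∫ x in Ω, K (x, y)) = ∫ y in S, -(pNeumann p s Ω u y) from
      setIntegral_congr_fun hS fun y _ => hinner y, integral_neg]
  have hRf : (∫ x in Ω, f x * v x) = 0 := by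
    have hz : ∀ x ∈ Ω, f x * v x = 0 := fun x hx => by
      rw [hv0 (fun h => hSΩ h hx), mul_zero]
    rw [setIntegral_congr_fun hΩm hz, integral_zero]
  have hRg : (∫ x in (closure Ω)ᶜ, g x * v x) = ∫ x in S, g x := by
    have hz : ∀ x, g x * v x = S.indicator g x := fun x => by
      by_cases hx : x ∈ S
      · rw [hv1 hx, mul_one, Set.indicator_of_mem hx]
      · rw [hv0 hx, mul_zero, Set.indicator_of_notMem hx]
    simp only [hz]
    rw [setIntegral_indicator hS, Set.inter_eq_right.2 hScl]
  rw [hcongr, hIseq, hD, hE, hRf, hRg] at hw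
  linarith

end AuxNeumann

/-- if `u ∈ X` is a weak solution of the Neumann problem
`(-Δ)^s_p u = f` in `Ω`, `𝒩_{s,p} u = g` in `ℝ^N \ Ω̄`, then the boundary condition
holds pointwise: `𝒩_{s,p} u (x) = g x` for a.e. `x ∈ ℝ^N \ Ω̄`. -/
theorem neumann_condition_pointwise {N : ℕ} (p s : ℝ) (hp : 1 < p)
    (hs : s ∈ Ioo (0:ℝ) 1) (Ω : Set (EuclideanSpace ℝ (Fin N)))
    (hΩo : IsOpen Ω) (hΩb : Bornology.IsBounded Ω)
    (f g : EuclideanSpace ℝ (Fin N) → ℝ)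
    (hf : MemLp f (ENNReal.ofReal (p / (p - 1))) (volume.restrict Ω))
    (hg : IntegrableOn g (closure Ω)ᶜ)
    (u : EuclideanSpace ℝ (Fin N) → ℝ)
    (huX : memX p s Ω g u)
    (hweak : ∀ v : EuclideanSpace ℝ (Fin N) → ℝ, memX p s Ω g v →
      (1 / 2) * (∫ z in crossRegion Ω,
          pKer p s u z.1 z.2 * (v z.1 - v z.2)) =
        (∫ x in Ω, f x * v x) + ∫ x in (closure Ω)ᶜ, g x * v x) :
    ∀ᵐ x ∂(volume.restrict (closure Ω)ᶜ), pNeumann p s Ω u x = g x := by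
  obtain ⟨hs0, -⟩ := hs
  have hp0 : (0:ℝ) < p := by linarith
  have hu : Measurable u := huX.1
  have hX := huX.2.2.2
  have hΩm : MeasurableSet Ω := hΩo.measurableSet
  have hclm : MeasurableSet (closure Ω)ᶜ := isClosed_closure.measurableSet.compl
  set φ := pNeumann p s Ω u with hφdef
  have hφm : Measurable φ := by
    have h := StronglyMeasurable.integral_prod_right' (ν := volume.restrict Ω)
      (measurable_pKer p s hu).stronglyMeasurable
    exact h.measurable
  set g₀ := hg.1.mk g with hg₀def
  have hg₀m : StronglyMeasurable g₀ := hg.1.stronglyMeasurable_mk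
  have hgg₀ : g =ᵐ[volume.restrict (closure Ω)ᶜ] g₀ := hg.1.ae_eq_mk
  have hg₀int : IntegrableOn g₀ (closure Ω)ᶜ := hg.congr hgg₀
  set A : ℕ → Set (EuclideanSpace ℝ (Fin N)) := fun n =>
    {x | (((n+1:ℕ)):ℝ≥0∞)⁻¹ ≤ EMetric.infEdist x Ω} ∩
      Metric.closedBall 0 ((n:ℝ)+1) with hAdef
  have hAm : ∀ n, MeasurableSet (A n) := fun n =>
    ((isClosed_le continuous_const EMetric.continuous_infEdist).measurableSet).inter
      measurableSet_closedBall
  have hAb : ∀ n, Bornology.IsBounded (A n) := fun n =>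
    (Metric.isBounded_closedBall).subset inter_subset_right
  have hAcl : ∀ n, A n ⊆ (closure Ω)ᶜ := by
    intro n x hx hmem
    have h0 : EMetric.infEdist x Ω = 0 := EMetric.mem_closure_iff_infEdist_zero.1 hmem
    have h1 := hx.1
    rw [Set.mem_setOf_eq, h0, le_zero_iff] at h1
    exact (ENNReal.inv_ne_zero.2 (ENNReal.natCast_ne_top _)) h1
  have hAdist : ∀ n, ∀ x ∈ A n, ∀ y ∈ Ω, (1:ℝ)/((n:ℝ)+1) ≤ dist x y := by
    intro n x hx y hy
    have h1 : (((n+1:ℕ)):ℝ≥0∞)⁻¹ ≤ edist x y :=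
      le_trans hx.1 (EMetric.infEdist_le_edist_of_mem hy)
    have heq : (((n+1:ℕ)):ℝ≥0∞)⁻¹ = ENNReal.ofReal (1/((n:ℝ)+1)) := by
      rw [one_div, ENNReal.ofReal_inv_of_pos (by positivity)]
      congr 1
      rw [show ((n:ℝ)+1) = ((n+1 : ℕ):ℝ) by push_cast; ring, ENNReal.ofReal_natCast]
    rw [heq, edist_dist] at h1
    exact (ENNReal.ofReal_le_ofReal_iff dist_nonneg).1 h1
  have hδpos : ∀ n : ℕ, (0:ℝ) < 1/((n:ℝ)+1) := fun n => by positivity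
  have hcover : (closure Ω)ᶜ ⊆ ⋃ n, A n := by
    intro x hx
    have h0 : EMetric.infEdist x Ω ≠ 0 := fun h =>
      hx (EMetric.mem_closure_iff_infEdist_zero.2 h)
    obtain ⟨m, hm⟩ := ENNReal.exists_inv_nat_lt h0
    obtain ⟨k, hk⟩ := exists_nat_ge ‖x‖
    refine mem_iUnion.2 ⟨max m k, ⟨?_, ?_⟩⟩
    · refine le_trans ?_ hm.le
      exact ENNReal.inv_le_inv' (by exact_mod_cast Nat.le_succ_of_le (le_max_left m k))
    · rw [Metric.mem_closedBall, dist_zero_right]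
      have hmk : (k:ℝ) ≤ ((max m k : ℕ):ℝ) := by exact_mod_cast le_max_right m k
      linarith
  have hkey : ∀ n, ∀ E : Set (EuclideanSpace ℝ (Fin N)), MeasurableSet E → E ⊆ A n →
      (∫ x in E, φ x) = ∫ x in E, g₀ x := by
    intro n E hEm hEA
    have h1 : (∫ x in E, φ x) = ∫ x in E, g x :=
      key_identity hp hs0 hΩo hΩb hg huX hweak hEm ((hAb n).subset hEA)
        (hEA.trans (hAcl n)) (hδpos n)
        (fun x hx y hy => hAdist n x (hEA hx) y hy)
    rw [h1]
    exact integral_congr_ae (ae_restrict_of_ae_restrict_of_subset (hEA.trans (hAcl n)) hgg₀)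
  have hφint : ∀ n, IntegrableOn φ (A n) := by
    intro n
    have hsub : A n ×ˢ Ω ⊆ crossRegion Ω := fun z hz => Or.inr hz.2
    have hK1 : IntegrableOn
        (fun z : EuclideanSpace ℝ (Fin N) × EuclideanSpace ℝ (Fin N) =>
          pKer p s u z.1 z.2) (A n ×ˢ Ω) :=
      integrableOn_pKer_prod hp hs0 hu hX (hAm n) hΩm (hAb n) hΩb hsub
        (hδpos n) (fun x hx y hy => hAdist n x hx y hy)
    have hK1' : Integrable
        (fun z : EuclideanSpace ℝ (Fin N) × EuclideanSpace ℝ (Fin N) =>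
          pKer p s u z.1 z.2)
        ((volume.restrict (A n)).prod (volume.restrict Ω)) := by
      rw [Measure.prod_restrict, ← Measure.volume_eq_prod]; exact hK1
    exact hK1'.integral_prod_left
  have hnull : ∀ n, volume {x | x ∈ A n ∧ φ x ≠ g₀ x} = 0 := by
    intro n
    have hgint' : IntegrableOn g₀ (A n) := hg₀int.mono_set (hAcl n)
    have main : ∀ S : Set (EuclideanSpace ℝ (Fin N)), MeasurableSet S → S ⊆ A n →
        (∀ x ∈ S, φ x ≠ g₀ x) → (∀ x ∈ S, g₀ x ≤ φ x) → volume S = 0 := by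
      intro S hSm hSA hne hle
      have hint : IntegrableOn (fun x => φ x - g₀ x) S :=
        ((hφint n).mono_set hSA).sub (hgint'.mono_set hSA)
      have hz : (∫ x in S, (φ x - g₀ x)) = 0 := by
        rw [integral_sub ((hφint n).mono_set hSA) (hgint'.mono_set hSA),
          hkey n S hSm hSA]
        ring
      have hnonneg : 0 ≤ᵐ[volume.restrict S] fun x => φ x - g₀ x :=
        (ae_restrict_iff' hSm).2 (Filter.Eventually.of_forall fun x hx =>
          sub_nonneg.2 (hle x hx))
      have hae := (integral_eq_zero_iff_of_nonneg_ae hnonneg hint).1 hz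
      have h0 : (volume.restrict S) {x | φ x - g₀ x ≠ 0} = 0 := by
        rw [Filter.EventuallyEq, ae_iff] at hae
        simpa using hae
      rw [Measure.restrict_apply' hSm] at h0
      refine measure_mono_null (fun x hx => ?_) h0
      exact ⟨sub_ne_zero.2 (hne x hx), hx⟩
    have main' : ∀ S : Set (EuclideanSpace ℝ (Fin N)), MeasurableSet S → S ⊆ A n →
        (∀ x ∈ S, φ x ≠ g₀ x) → (∀ x ∈ S, φ x ≤ g₀ x) → volume S = 0 := by
      intro S hSm hSA hne hle
      have hint : IntegrableOn (fun x => g₀ x - φ x) S :=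
        (hgint'.mono_set hSA).sub ((hφint n).mono_set hSA)
      have hz : (∫ x in S, (g₀ x - φ x)) = 0 := by
        rw [integral_sub (hgint'.mono_set hSA) ((hφint n).mono_set hSA),
          hkey n S hSm hSA]
        ring
      have hnonneg : 0 ≤ᵐ[volume.restrict S] fun x => g₀ x - φ x :=
        (ae_restrict_iff' hSm).2 (Filter.Eventually.of_forall fun x hx =>
          sub_nonneg.2 (hle x hx))
      have hae := (integral_eq_zero_iff_of_nonneg_ae hnonneg hint).1 hz
      have h0 : (volume.restrict S) {x | g₀ x - φ x ≠ 0} = 0 := by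
        rw [Filter.EventuallyEq, ae_iff] at hae
        simpa using hae
      rw [Measure.restrict_apply' hSm] at h0
      refine measure_mono_null (fun x hx => ?_) h0
      exact ⟨sub_ne_zero.2 fun h => hne x hx h.symm, hx⟩
    have hplus := main (A n ∩ {x | g₀ x < φ x})
      ((hAm n).inter (measurableSet_lt hg₀m.measurable hφm)) inter_subset_left
      (fun x hx => (ne_of_gt hx.2)) (fun x hx => hx.2.le)
    have hminus := main' (A n ∩ {x | φ x < g₀ x})
      ((hAm n).inter (measurableSet_lt hφm hg₀m.measurable)) inter_subset_left
      (fun x hx => (ne_of_lt hx.2)) (fun x hx => hx.2.le)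
    refine measure_mono_null (fun x hx => ?_) (measure_union_null hplus hminus)
    rcases lt_or_gt_of_ne hx.2 with h | h
    · exact Or.inr ⟨hx.1, h⟩
    · exact Or.inl ⟨hx.1, h⟩
  have htot : volume ({x | φ x ≠ g₀ x} ∩ (closure Ω)ᶜ) = 0 := by
    refine measure_mono_null ?_ (measure_iUnion_null hnull)
    rintro x ⟨hne, hcl⟩
    obtain ⟨n, hn⟩ := mem_iUnion.1 (hcover hcl)
    exact mem_iUnion.2 ⟨n, hn, hne⟩
  have h1 : φ =ᵐ[volume.restrict (closure Ω)ᶜ] g₀ := by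
    rw [Filter.EventuallyEq, ae_iff, Measure.restrict_apply' hclm]
    simpa using htot
  exact h1.trans hgg₀.symm
end
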